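/- arXiv:2602.00693 — 3 statements merged into one kernel-verified Lean document; each statement's English description precedes it below -/
import Mathlib

section
/- Let v be a hidden node of G and let L : ℝ^E → ℝ be a differentiable function such that L(T^v_α(θ)) = L(θ) for every θ ∈ ℝ^E and every α > 0. Then for every θ ∈ ℝ^E, the gradient g(θ) = ∇L(θ) satisfies the local orthogonality (network-flow) condition Σ_{e ∈ E, e entering v} θ_e · g(θ)_e − Σ_{e ∈ E, e leaving v} θ_e · g(θ)_e = 0. -/
/-! Differentiating `α ↦ L (T^v_α θ)`, which is constant for `α > 0`, at `α = 1` gives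
`⟪∇L(θ), ξ⟫ = 0`, where the velocity `ξ` of the rescaling orbit is `θ_e` on edges entering `v`,
`-θ_e` on edges leaving `v` and `0` elsewhere; acyclicity rules out self-loops, so no edge is
counted both ways. -/

noncomputable section

open Matrix Finset

/-- A finite DAG modeling a feed-forward neural architecture: nodes `V`,
edges `edges`, input nodes `VI` (no incoming edges), output nodes `VO`
(no outgoing edges), with `VI` and `VO` disjoint. -/
structure DagNet where
  V : Type
  [fintypeV : Fintype V]
  [decEqV : DecidableEq V]
  edges : Finset (V × V)
  VI : Finset V
  VO : Finset V
  acyclic : ∀ v : V, ¬ Relation.TransGen (fun a b : V => (a, b) ∈ edges) v v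
  no_edge_into_input : ∀ e ∈ edges, Prod.snd e ∉ VI
  no_edge_from_output : ∀ e ∈ edges, Prod.fst e ∉ VO
  io_disjoint : Disjoint VI VO

attribute [instance] DagNet.fintypeV DagNet.decEqV

namespace DagNet

variable (G : DagNet)

/-- The hidden nodes `Ṽ = V \ (V_I ∪ V_O)`. -/
def hidden : Finset G.V := Finset.univ \ (G.VI ∪ G.VO)

/-- The type of hidden nodes. -/
abbrev Hidden : Type := {v : G.V // v ∈ G.hidden}

/-- The type of edges. -/
abbrev Edge : Type := {e : G.V × G.V // e ∈ G.edges}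

/-- The incidence matrix `B̃` of `G` restricted to hidden rows:
`B̃_{v,(i,j)} = 1` if `v = j`, `-1` if `v = i`, `0` otherwise. -/
def B : Matrix G.Hidden G.Edge ℝ :=
  Matrix.of fun v e =>
    if (e : G.V × G.V).2 = (v : G.V) then 1
    else if (e : G.V × G.V).1 = (v : G.V) then -1 else 0

/-- The rescaling action `T^v_α`: multiplies by `α` the weight of every edge
entering `v`, by `α⁻¹` the weight of every edge leaving `v`, and leaves the
other coordinates unchanged. -/
def rescale (v : G.V) (α : ℝ) (θ : EuclideanSpace ℝ G.Edge) :
    EuclideanSpace ℝ G.Edge :=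
  WithLp.toLp 2 fun e => if (e : G.V × G.V).2 = v then α * θ e
    else if (e : G.V × G.V).1 = v then α⁻¹ * θ e else θ e

/-- `Reaches a b` iff there is a directed path (possibly trivial) from `a` to `b`. -/
def Reaches (a b : G.V) : Prop :=
  Relation.ReflTransGen (fun x y : G.V => (x, y) ∈ G.edges) a b

/-- The invariant set `H_G(c) = {θ : B̃ θ² = c}` inside Euclidean space `ℝ^E`. -/
def invariantSet (c : G.Hidden → ℝ) : Set (EuclideanSpace ℝ G.Edge) :=
  {θ | G.B.mulVec (fun e => θ e ^ 2) = c}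

/-- `u : Fin (k+1) → V` is a directed path in `G`. -/
def IsPathFun {k : ℕ} (u : Fin (k + 1) → G.V) : Prop :=
  ∀ i : Fin k, (u i.castSucc, u i.succ) ∈ G.edges

/-- Pure ancestors of `v`: hidden ancestors `w` of `v` such that every directed
path from `w` to an output node passes through `v` (this contains `v` itself
whenever `v` is hidden). -/
def pureAnc (v : G.V) : Set G.V :=
  {w | w ∈ G.hidden ∧ G.Reaches w v ∧
    ∀ (k : ℕ) (u : Fin (k + 1) → G.V), G.IsPathFun u → u 0 = w →
      u (Fin.last k) ∈ G.VO → ∃ i, u i = v}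

/-- Pure descendants of `v`: hidden descendants `w` of `v` such that every
directed path from an input node to `w` passes through `v`. -/
def pureDesc (v : G.V) : Set G.V :=
  {w | w ∈ G.hidden ∧ G.Reaches v w ∧
    ∀ (k : ℕ) (u : Fin (k + 1) → G.V), G.IsPathFun u → u (Fin.last k) = w →
      u 0 ∈ G.VI → ∃ i, u i = v}

/-- An out-bottleneck: a hidden node with exactly one outgoing edge. -/
def OutBottleneck (v : G.V) : Prop :=
  v ∈ G.hidden ∧ (G.edges.filter (fun e => e.1 = v)).card = 1

/-- An in-bottleneck: a hidden node with exactly one incoming edge. -/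
def InBottleneck (v : G.V) : Prop :=
  v ∈ G.hidden ∧ (G.edges.filter (fun e => e.2 = v)).card = 1

/-- The projection sending each hidden node to itself and each
input/output node to the glued point `⋆ = none`. -/
def pi (v : G.V) : Option G.Hidden :=
  if h : v ∈ G.hidden then some ⟨v, h⟩ else none

/-- The undirected graph on `Ṽ ⊔ {⋆}` with an edge between `π(u)` and `π(w)`
for each edge `(u,w)` of `G` with nonzero weight. -/
def quotGraph (θ : G.Edge → ℝ) : SimpleGraph (Option G.Hidden) :=
  SimpleGraph.fromRel (fun a b => ∃ e : G.Edge, θ e ≠ 0 ∧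
    a = G.pi (e : G.V × G.V).1 ∧ b = G.pi (e : G.V × G.V).2)

end DagNet

open Filter Topology

theorem HasDerivAt.fderiv_apply_eq_zero_of_eventually_const {𝕜 E F : Type*}
    [NontriviallyNormedField 𝕜] [NormedAddCommGroup E] [NormedSpace 𝕜 E] [NormedAddCommGroup F]
    [NormedSpace 𝕜 F] {L : E → F} {γ : 𝕜 → E} {γ' : E} {t : 𝕜} (hγ : HasDerivAt γ γ' t)
    (hL : DifferentiableAt 𝕜 L (γ t)) (hconst : ∀ᶠ s in 𝓝 t, L (γ s) = L (γ t)) :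
    fderiv 𝕜 L (γ t) γ' = 0 :=
  (hL.hasFDerivAt.comp_hasDerivAt t hγ).unique
    ((hasDerivAt_const t (L (γ t))).congr_of_eventuallyEq hconst)

namespace DagNet

variable (G : DagNet)

theorem fst_ne_snd (e : G.Edge) : (e : G.V × G.V).1 ≠ (e : G.V × G.V).2 := by
  obtain ⟨⟨a, b⟩, he⟩ := e
  rintro (rfl : a = b)
  exact G.acyclic a (.single he)

theorem rescale_one (v : G.V) (θ : EuclideanSpace ℝ G.Edge) : G.rescale v 1 θ = θ := by
  ext e
  simp [rescale]

def rescaleGenerator (v : G.V) (θ : EuclideanSpace ℝ G.Edge) : EuclideanSpace ℝ G.Edge :=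
  WithLp.toLp 2 fun e => if (e : G.V × G.V).2 = v then θ e
    else if (e : G.V × G.V).1 = v then -θ e else 0

theorem hasDerivAt_rescale_one (v : G.V) (θ : EuclideanSpace ℝ G.Edge) :
    HasDerivAt (fun α => G.rescale v α θ) (G.rescaleGenerator v θ) 1 := by
  have hcoord : HasDerivAt (fun α (e : G.Edge) => if (e : G.V × G.V).2 = v then α * θ e
      else if (e : G.V × G.V).1 = v then α⁻¹ * θ e else θ e)
      (fun e : G.Edge => if (e : G.V × G.V).2 = v then θ e
      else if (e : G.V × G.V).1 = v then -θ e else 0) 1 := by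
    refine hasDerivAt_pi.2 fun e => ?_
    split_ifs
    · simpa using (hasDerivAt_id (1 : ℝ)).mul_const (θ e)
    · simpa using (hasDerivAt_inv (one_ne_zero (α := ℝ))).mul_const (θ e)
    · exact hasDerivAt_const _ _
  exact (PiLp.hasFDerivAt_toLp 2 _).comp_hasDerivAt 1 hcoord

theorem inner_rescaleGenerator (v : G.V) (θ g : EuclideanSpace ℝ G.Edge) :
    inner ℝ g (G.rescaleGenerator v θ) =
      ∑ e ∈ Finset.univ.filter (fun e : G.Edge => (e : G.V × G.V).2 = v), θ e * g e
        - ∑ e ∈ Finset.univ.filter (fun e : G.Edge => (e : G.V × G.V).1 = v), θ e * g e := by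
  rw [Finset.sum_filter, Finset.sum_filter, ← Finset.sum_sub_distrib, PiLp.inner_apply]
  refine Finset.sum_congr rfl fun e _ => ?_
  by_cases h2 : (e : G.V × G.V).2 = v
  · have h1 : (e : G.V × G.V).1 ≠ v := h2 ▸ G.fst_ne_snd e
    simp [rescaleGenerator, h1, h2]
  · by_cases h1 : (e : G.V × G.V).1 = v <;> simp [rescaleGenerator, h1, h2]

end DagNet

theorem statement0_general (G : DagNet) (v : G.V)
    (L : EuclideanSpace ℝ G.Edge → ℝ) (hL : Differentiable ℝ L)
    (hinv : ∀ (θ : EuclideanSpace ℝ G.Edge) (α : ℝ), 0 < α →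
      L (G.rescale v α θ) = L θ)
    (θ : EuclideanSpace ℝ G.Edge) :
    ∑ e ∈ Finset.univ.filter (fun e : G.Edge => (e : G.V × G.V).2 = v),
        θ e * gradient L θ e
      - ∑ e ∈ Finset.univ.filter (fun e : G.Edge => (e : G.V × G.V).1 = v),
        θ e * gradient L θ e = 0 := by
  have hconst : ∀ᶠ α in 𝓝 1, L (G.rescale v α θ) = L (G.rescale v 1 θ) := by
    filter_upwards [eventually_gt_nhds one_pos] with α hα
    rw [hinv θ α hα, G.rescale_one]
  have hflow := (G.hasDerivAt_rescale_one v θ).fderiv_apply_eq_zero_of_eventually_const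
    (hL _) hconst
  rw [G.rescale_one] at hflow
  rw [← G.inner_rescaleGenerator, gradient, InnerProductSpace.toDual_symm_apply, hflow]

/-- for a hidden node `v` and a differentiable `L` invariant under
the rescaling `T^v_α` for all `α > 0`, the gradient satisfies the local
network-flow orthogonality condition at `v`. -/
theorem statement0 (G : DagNet) (v : G.V) (hv : v ∈ G.hidden)
    (L : EuclideanSpace ℝ G.Edge → ℝ) (hL : Differentiable ℝ L)
    (hinv : ∀ (θ : EuclideanSpace ℝ G.Edge) (α : ℝ), 0 < α →
      L (G.rescale v α θ) = L θ)
    (θ : EuclideanSpace ℝ G.Edge) :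
    ∑ e ∈ Finset.univ.filter (fun e : G.Edge => (e : G.V × G.V).2 = v),
        θ e * gradient L θ e
      - ∑ e ∈ Finset.univ.filter (fun e : G.Edge => (e : G.V × G.V).1 = v),
        θ e * gradient L θ e = 0 :=
  statement0_general G v L hL hinv θ
end
end

section
/- Assume every hidden node of G lies on a directed path from an input node to an output node. Then for every c ∈ ℝ^{Ṽ}, the invariant set H_G(c) ⊆ ℝ^E is a connected subset of ℝ^E if and only if the following two conditions hold: (1) for every out-bottleneck v and every set T of pure ancestors of v that is stable by forward edges, Σ_{u∈T} c_u ≥ 0; and (2) for every in-bottleneck v and every set T of pure descendants of v that is stable by backward edges, Σ_{u∈T} c_u ≤ 0. -/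
noncomputable section

open Matrix Finset

/-!
Squaring coordinates maps `H_G(c)` onto the polytope `P(c) = flowPolytope c = {x ≥ 0 : B̃ x = c}`,
and `H_G(c)` is the union of the images of `P(c)` under the branches `signedSqrt σ` of the square
root. These convex pieces are glued along the faces `{x_e = 0}`, so `H_G(c)` is connected iff `P(c)`
(which is nonempty since every hidden node lies on an input–output path) meets every face.

Meeting the face of the unique edge out of (into) a bottleneck gives condition (1) (resp. (2)) by
summing `B̃ x = c` over `T`. Conversely, if `P(c)` misses `{x_e = 0}`, Farkas' lemma yields a
potential `y` on the hidden nodes, non-increasing along every edge except `e`, with `⟪y, c⟫ > 0`.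
Its superlevel sets `{y > t}` (`t ≥ 0`) are backward-stable sets of pure descendants of the
in-bottleneck `e.2`, and its sublevel sets `{y < -t}` are forward-stable sets of pure ancestors of
the out-bottleneck `e.1`; a layer-cake decomposition of `⟪y, c⟫` then gives `⟪y, c⟫ ≤ 0` from (1)
and (2). The statements about `e.1` are those about `e.2` in the reversed network.
-/

theorem Matrix.exists_nonneg_mulVec_eq_or_exists_vecMul_nonpos {I J : Type*} [Fintype I]
    [Fintype J] [DecidableEq J] (A : Matrix I J ℝ) (b : I → ℝ) (s : Finset J) :
    (∃ x : J → ℝ, 0 ≤ x ∧ (∀ j ∉ s, x j = 0) ∧ A *ᵥ x = b) ∨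
      ∃ y : I → ℝ, (∀ j ∈ s, (y ᵥ* A) j ≤ 0) ∧ 0 < y ⬝ᵥ b := by
  induction s using Finset.induction_on generalizing A b with
  | empty =>
    by_cases hb : b = 0
    · exact .inl ⟨0, le_rfl, fun _ _ => rfl, by simp [hb]⟩
    · exact .inr ⟨b, by simp,
        lt_of_le_of_ne (dotProduct_self_star_nonneg b) (Ne.symm (by simpa using hb))⟩
  | insert j₀ s hj₀ ih =>
    obtain ⟨x, hx0, hxs, hx⟩ | ⟨y, hy, hyb⟩ := ih A b
    · exact .inl ⟨x, hx0, fun j hj => hxs j fun h => hj (mem_insert_of_mem h), hx⟩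
    by_cases hyj₀ : (y ᵥ* A) j₀ ≤ 0
    · exact .inr ⟨y, forall_mem_insert _ _ _ |>.2 ⟨hyj₀, hy⟩, hyb⟩
    rw [not_le] at hyj₀
    set a := A.col j₀
    set r := (y ᵥ* A) j₀
    -- Project everything along `a` onto the kernel of `y` and recurse.
    obtain ⟨x, hx0, hxs, hx⟩ | ⟨y', hy', hyb'⟩ :=
      ih (A - r⁻¹ • vecMulVec a (y ᵥ* A)) (b - (r⁻¹ * (y ⬝ᵥ b)) • a)
    · have hyx : (y ᵥ* A) ⬝ᵥ x ≤ 0 := by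
        refine Finset.sum_nonpos fun j _ => ?_
        by_cases hj : j ∈ s
        · exact mul_nonpos_of_nonpos_of_nonneg (hy j hj) (hx0 j)
        · simp [hxs j hj]
      set t := r⁻¹ * (y ⬝ᵥ b - (y ᵥ* A) ⬝ᵥ x)
      have ht : 0 ≤ t := mul_nonneg (inv_nonneg.2 hyj₀.le) (by linarith)
      refine .inl ⟨x + t • Pi.single j₀ 1,
        add_nonneg hx0 (smul_nonneg ht (Pi.single_nonneg.2 zero_le_one)), fun j hj => ?_, ?_⟩
      · rw [mem_insert, not_or] at hj
        simp [hxs j hj.2, hj.1]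
      · simp only [sub_mulVec, smul_mulVec, vecMulVec_mulVec, op_smul_eq_smul] at hx
        rw [mulVec_add, mulVec_smul, mulVec_single_one]
        linear_combination (norm := module) hx
    · refine .inr ⟨y' - (r⁻¹ * (y' ⬝ᵥ a)) • y, ?_, ?_⟩
      · have key : (y' - (r⁻¹ * (y' ⬝ᵥ a)) • y) ᵥ* A =
            y' ᵥ* (A - r⁻¹ • vecMulVec a (y ᵥ* A)) := by
          simp only [sub_vecMul, smul_vecMul, vecMul_sub, vecMul_smul, vecMul_vecMulVec, smul_smul,
            mul_comm]
        have hj₀' : ((y' - (r⁻¹ * (y' ⬝ᵥ a)) • y) ᵥ* A) j₀ = 0 := by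
          rw [sub_vecMul, smul_vecMul]
          change y' ⬝ᵥ a - r⁻¹ * (y' ⬝ᵥ a) * r = 0
          field_simp
          ring
        exact forall_mem_insert _ _ _ |>.2 ⟨hj₀'.le, key ▸ hy'⟩
      · simp only [sub_dotProduct, smul_dotProduct, dotProduct_sub, dotProduct_smul,
          smul_eq_mul] at hyb' ⊢
        linarith

theorem Finset.sum_max_mul_nonpos_of_sum_superlevel_nonpos {ι : Type*} [Fintype ι]
    (z c : ι → ℝ) (h : ∀ t, 0 ≤ t → ∑ i with t < z i, c i ≤ 0) :
    ∑ i, max (z i) 0 * c i ≤ 0 := by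
  induction hn : #{i | 0 < z i} using Nat.strong_induction_on generalizing z with
  | _ n ih =>
  obtain hpos | hpos := ({i | 0 < z i} : Finset ι).eq_empty_or_nonempty
  · refine (sum_eq_zero fun i _ => ?_).le
    have : z i ≤ 0 := not_lt.1 fun hi => by simpa [hi] using eq_empty_iff_forall_notMem.1 hpos i
    rw [max_eq_right this, zero_mul]
  -- Peel off the lowest positive layer `{0 < z}` of height `t`, then recurse on `z - t`.
  obtain ⟨i₀, hi₀, hmin⟩ := exists_min_image _ z hpos
  set t := z i₀
  have ht : 0 < t := (mem_filter.1 hi₀).2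
  have hmin (i) (hi : 0 < z i) : t ≤ z i := hmin i (by simpa using hi)
  have hsplit : ∑ i, max (z i) 0 * c i =
      ∑ i, max (z i - t) 0 * c i + t * ∑ i with 0 < z i, c i := by
    rw [sum_filter, mul_sum, ← sum_add_distrib]
    refine sum_congr rfl fun i _ => ?_
    by_cases hi : 0 < z i
    · rw [max_eq_left hi.le, max_eq_left (sub_nonneg.2 (hmin i hi)), if_pos hi]; ring
    · rw [max_eq_right (not_lt.1 hi), max_eq_right (by linarith [not_lt.1 hi]), if_neg hi]; ring
  have hcard : #{i | 0 < z i - t} < n := by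
    refine hn ▸ card_lt_card ⟨monotone_filter_right _ fun i _ hi => ?_, fun hsub => ?_⟩
    · linarith [sub_pos.1 hi]
    · simpa [t] using hsub hi₀
  have hrec := ih _ hcard (fun i => z i - t)
    (fun s hs => by simpa only [lt_sub_iff_add_lt] using h (s + t) (by linarith)) rfl
  rw [hsplit]
  linarith [mul_nonpos_of_nonneg_of_nonpos ht.le (h 0 le_rfl)]

theorem Function.reflTransGen_update {ι β : Type*} [Fintype ι] [DecidableEq ι] (σ τ : ι → β) :
    Relation.ReflTransGen (fun σ τ : ι → β => ∃ i b, τ = update σ i b) σ τ := by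
  suffices ∀ s : Finset ι, Relation.ReflTransGen (fun σ τ : ι → β => ∃ i b, τ = update σ i b)
      σ (s.piecewise τ σ) by simpa using this univ
  intro s
  induction s using Finset.induction_on with
  | empty => simpa using Relation.ReflTransGen.refl
  | insert i s _ ih =>
    rw [Finset.piecewise_insert]
    exact ih.tail ⟨i, τ i, rfl⟩

theorem Relation.ReflTransGen.of_fin {α : Type*} {r : α → α → Prop} {k : ℕ} (u : Fin (k + 1) → α)
    (h : ∀ i : Fin k, r (u i.castSucc) (u i.succ)) : ReflTransGen r (u 0) (u (Fin.last k)) := by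
  induction k with
  | zero => rfl
  | succ k ih => exact .head (h 0) (ih (fun i => u i.succ) fun i => h i.succ)

section signedSqrt

variable {ι : Type*}

def signedSqrt (σ : ι → Bool) (x : ι → ℝ) : EuclideanSpace ℝ ι :=
  WithLp.toLp 2 fun i => if σ i then √(x i) else -√(x i)

lemma continuous_signedSqrt (σ : ι → Bool) : Continuous (signedSqrt σ) := by
  refine (PiLp.continuous_toLp _ _).comp (continuous_pi fun i => ?_)
  have : Continuous fun x : ι → ℝ => √(x i) := (continuous_apply i).sqrt
  split_ifs
  exacts [this, this.neg]

lemma signedSqrt_apply_sq (σ : ι → Bool) {x : ι → ℝ} (hx : 0 ≤ x) (i : ι) :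
    signedSqrt σ x i ^ 2 = x i := by
  by_cases h : σ i <;> simp [signedSqrt, h, Real.sq_sqrt (hx i)]

lemma signedSqrt_sign_sq (θ : EuclideanSpace ℝ ι) :
    signedSqrt (fun i => decide (0 ≤ θ i)) (fun i => θ i ^ 2) = θ := by
  ext i
  by_cases h : 0 ≤ θ i
  · simp [signedSqrt, h, Real.sqrt_sq h]
  · simp [signedSqrt, h, Real.sqrt_sq_eq_abs, abs_of_neg (not_le.1 h)]

lemma signedSqrt_update_of_eq_zero [DecidableEq ι] (σ : ι → Bool) {x : ι → ℝ} {i : ι}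
    (hx : x i = 0) (b : Bool) : signedSqrt (Function.update σ i b) x = signedSqrt σ x := by
  ext j
  by_cases hj : j = i
  · subst hj
    simp [signedSqrt, hx]
  · simp [signedSqrt, hj]

end signedSqrt

namespace DagNet

variable {G : DagNet} {c : G.Hidden → ℝ}

lemma not_reaches_of_mem_edges {a b : G.V} (h : (a, b) ∈ G.edges) : ¬ G.Reaches b a :=
  fun hba => G.acyclic a (.head' h hba)

lemma ne_of_mem_edges {a b : G.V} (h : (a, b) ∈ G.edges) : a ≠ b := by
  rintro rfl
  exact not_reaches_of_mem_edges h .refl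

lemma eq_of_reaches_of_mem_VO {a b : G.V} (ha : a ∈ G.VO) (h : G.Reaches a b) : a = b := by
  obtain rfl | ⟨c, hac, -⟩ := h.cases_head
  · rfl
  · exact absurd ha (G.no_edge_from_output _ hac)

lemma mem_hidden {v : G.V} : v ∈ G.hidden ↔ v ∉ G.VI ∧ v ∉ G.VO := by
  simp [hidden]

lemma inBottleneck_iff {v : G.V} :
    G.InBottleneck v ↔ v ∈ G.hidden ∧ ∃! f, f ∈ G.edges ∧ f.2 = v := by
  simp [InBottleneck, card_eq_one_iff_existsUnique]

lemma outBottleneck_iff {v : G.V} :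
    G.OutBottleneck v ↔ v ∈ G.hidden ∧ ∃! f, f ∈ G.edges ∧ f.1 = v := by
  simp [OutBottleneck, card_eq_one_iff_existsUnique]

lemma B_apply (v : G.Hidden) (f : G.Edge) :
    G.B v f = (if f.1.2 = v then 1 else 0) - (if f.1.1 = v then 1 else 0) := by
  have hf : f.1.1 ≠ f.1.2 := ne_of_mem_edges f.2
  by_cases h₂ : f.1.2 = v <;> by_cases h₁ : f.1.1 = v
  · exact absurd (h₁.trans h₂.symm) hf
  all_goals simp [B, h₁, h₂]

def extendHidden (y : G.Hidden → ℝ) (w : G.V) : ℝ :=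
  if h : w ∈ G.hidden then y ⟨w, h⟩ else 0

lemma extendHidden_val (y : G.Hidden → ℝ) (v : G.Hidden) : G.extendHidden y v = y v := by
  simp [extendHidden, v.2]

lemma extendHidden_of_notMem (y : G.Hidden → ℝ) {w : G.V} (hw : w ∉ G.hidden) :
    G.extendHidden y w = 0 :=
  dif_neg hw

lemma vecMul_B (y : G.Hidden → ℝ) (f : G.Edge) :
    (y ᵥ* G.B) f = G.extendHidden y f.1.2 - G.extendHidden y f.1.1 := by
  have key (w : G.V) : ∑ v : G.Hidden, y v * (if w = v then 1 else 0) = G.extendHidden y w := by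
    by_cases hw : w ∈ G.hidden
    · rw [extendHidden, dif_pos hw, Finset.sum_eq_single ⟨w, hw⟩ (fun v _ hv => ?_) (by simp)]
      · simp
      · simp [show w ≠ v from fun h => hv (Subtype.ext h.symm)]
    · rw [extendHidden_of_notMem y hw]
      exact Finset.sum_eq_zero fun v _ => by simp [show w ≠ v from fun h => hw (h ▸ v.2)]
  simp only [vecMul, dotProduct, B_apply, mul_sub, Finset.sum_sub_distrib, key]

lemma exists_nonneg_mulVec_B_of_reaches {a b : G.V} (h : G.Reaches a b) :
    ∃ x : G.Edge → ℝ, 0 ≤ x ∧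
      ∀ v : G.Hidden, (G.B *ᵥ x) v = (if b = v then 1 else 0) - (if a = v then 1 else 0) := by
  induction h using Relation.ReflTransGen.head_induction_on with
  | refl => exact ⟨0, le_rfl, by simp⟩
  | head hac _ ih =>
    obtain ⟨x, hx0, hx⟩ := ih
    refine ⟨x + Pi.single ⟨_, hac⟩ 1, add_nonneg hx0 (Pi.single_nonneg.2 zero_le_one),
      fun v => ?_⟩
    rw [mulVec_add, mulVec_single_one, Pi.add_apply, hx, col_apply, B_apply]
    ring

def flowPolytope (G : DagNet) (c : G.Hidden → ℝ) : Set (G.Edge → ℝ) :=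
  {x | 0 ≤ x ∧ G.B *ᵥ x = c}

lemma flowPolytope_nonempty
    (hpath : ∀ v ∈ G.hidden, ∃ i ∈ G.VI, ∃ o ∈ G.VO, G.Reaches i v ∧ G.Reaches v o)
    (c : G.Hidden → ℝ) : (G.flowPolytope c).Nonempty := by
  -- Route `max (c v) 0` units from an input to `v` and `max (-c v) 0` units from `v` to an output.
  have hflows (v : G.Hidden) : ∃ xin xout : G.Edge → ℝ, 0 ≤ xin ∧ 0 ≤ xout ∧
      ∀ w : G.Hidden, (G.B *ᵥ xin) w = (if v = w then 1 else 0) ∧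
        (G.B *ᵥ xout) w = -(if v = w then 1 else 0) := by
    obtain ⟨i, hi, o, ho, hiv, hvo⟩ := hpath v v.2
    obtain ⟨xin, hxin0, hxin⟩ := exists_nonneg_mulVec_B_of_reaches hiv
    obtain ⟨xout, hxout0, hxout⟩ := exists_nonneg_mulVec_B_of_reaches hvo
    refine ⟨xin, xout, hxin0, hxout0, fun w => ⟨?_, ?_⟩⟩
    · rw [hxin, if_neg fun h : i = w => (mem_hidden.1 (h ▸ w.2)).1 hi]
      simp only [Subtype.coe_inj, sub_zero]
    · rw [hxout, if_neg fun h : o = w => (mem_hidden.1 (h ▸ w.2)).2 ho]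
      simp only [Subtype.coe_inj, zero_sub]
  choose xin xout hxin0 hxout0 hx using hflows
  refine ⟨∑ v, (max (c v) 0 • xin v + max (-c v) 0 • xout v), Finset.sum_nonneg fun v _ =>
    add_nonneg (smul_nonneg (le_max_right _ _) (hxin0 v))
      (smul_nonneg (le_max_right _ _) (hxout0 v)), funext fun w => ?_⟩
  simp only [mulVec_sum, mulVec_add, mulVec_smul, Finset.sum_apply, Pi.add_apply, Pi.smul_apply,
    smul_eq_mul, (hx _ w).1, (hx _ w).2]
  simp only [mul_neg, ← sub_eq_add_neg, ← sub_mul, max_zero_sub_eq_self]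
  simp

lemma mem_invariantSet_iff {θ : EuclideanSpace ℝ G.Edge} :
    θ ∈ G.invariantSet c ↔ (fun f => θ f ^ 2) ∈ G.flowPolytope c :=
  ⟨fun h => ⟨fun _ => sq_nonneg _, h⟩, fun h => h.2⟩

lemma invariantSet_eq_iUnion :
    G.invariantSet c = ⋃ σ, signedSqrt σ '' G.flowPolytope c := by
  ext θ
  simp only [Set.mem_iUnion, Set.mem_image]
  refine ⟨fun hθ => ⟨_, _, mem_invariantSet_iff.1 hθ, signedSqrt_sign_sq θ⟩, ?_⟩
  rintro ⟨σ, x, hx, rfl⟩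
  rw [mem_invariantSet_iff]
  simpa only [signedSqrt_apply_sq σ hx.1] using hx

theorem isConnected_invariantSet (hne : (G.flowPolytope c).Nonempty)
    (hzero : ∀ e : G.Edge, ∃ x ∈ G.flowPolytope c, x e = 0) :
    IsConnected (G.invariantSet c) := by
  have hconvex : Convex ℝ (G.flowPolytope c) := by
    rintro x ⟨hx0, hx⟩ y ⟨hy0, hy⟩ a b ha hb hab
    refine ⟨add_nonneg (smul_nonneg ha hx0) (smul_nonneg hb hy0), ?_⟩
    rw [mulVec_add, mulVec_smul, mulVec_smul, hx, hy, ← add_smul, hab, one_smul]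
  obtain ⟨x, hx⟩ := hne
  rw [invariantSet_eq_iUnion]
  refine ⟨⟨signedSqrt (fun _ => true) x, Set.mem_iUnion.2 ⟨_, x, hx, rfl⟩⟩,
    IsPreconnected.iUnion_of_reflTransGen
      (fun σ => hconvex.isPreconnected.image _ (continuous_signedSqrt σ).continuousOn)
      fun σ τ => ?_⟩
  -- Pieces whose sign patterns differ only at `e` meet at a point with vanishing `e`-coordinate.
  refine Relation.ReflTransGen.mono ?_ σ τ (Function.reflTransGen_update σ τ)
  rintro σ _ ⟨e, b, rfl⟩
  obtain ⟨z, hz, hze⟩ := hzero e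
  exact ⟨signedSqrt σ z, ⟨z, hz, rfl⟩, z, hz, signedSqrt_update_of_eq_zero σ hze b⟩

theorem exists_mem_flowPolytope_eq_zero (hconn : IsConnected (G.invariantSet c)) (e : G.Edge) :
    ∃ x ∈ G.flowPolytope c, x e = 0 := by
  obtain ⟨θ, hθ⟩ := hconn.nonempty
  -- Flipping the sign of `θ e` stays in `H_G(c)`, so the connected image of `θ ↦ θ e` contains 0.
  set θ' : EuclideanSpace ℝ G.Edge := WithLp.toLp 2 (Function.update θ.ofLp e (-θ e))
  have hθ' : θ' ∈ G.invariantSet c := by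
    rw [mem_invariantSet_iff] at hθ ⊢
    convert hθ using 1
    funext f
    by_cases hf : f = e
    · subst hf; simp [θ']
    · simp [θ', hf]
  have himage := (hconn.isPreconnected.image _
    ((continuous_apply e).comp (PiLp.continuous_ofLp 2 _)).continuousOn).ordConnected
  have h0 : (0 : ℝ) ∈ Set.uIcc (θ e) (θ' e) := by
    rcases le_total 0 (θ e) with h | h <;> simp [θ', h]
  obtain ⟨ψ, hψ, hψe⟩ := himage.uIcc_subset ⟨θ, hθ, rfl⟩ ⟨θ', hθ', rfl⟩ h0
  exact ⟨_, mem_invariantSet_iff.1 hψ, by simpa using hψe⟩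

/-- Condition (1). -/
def OutBalanced (G : DagNet) (c : G.Hidden → ℝ) : Prop :=
  ∀ v : G.V, G.OutBottleneck v → ∀ T : Finset G.Hidden,
    (∀ u ∈ T, (u : G.V) ∈ G.pureAnc v) →
    (∀ u ∈ T, (u : G.V) ≠ v → ∀ w : G.V, ((u : G.V), w) ∈ G.edges →
      ∃ hw : w ∈ G.hidden, (⟨w, hw⟩ : G.Hidden) ∈ T) →
    0 ≤ ∑ u ∈ T, c u

/-- Condition (2). -/
def InBalanced (G : DagNet) (c : G.Hidden → ℝ) : Prop :=
  ∀ v : G.V, G.InBottleneck v → ∀ T : Finset G.Hidden,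
    (∀ u ∈ T, (u : G.V) ∈ G.pureDesc v) →
    (∀ u ∈ T, (u : G.V) ≠ v → ∀ w : G.V, (w, (u : G.V)) ∈ G.edges →
      ∃ hw : w ∈ G.hidden, (⟨w, hw⟩ : G.Hidden) ∈ T) →
    ∑ u ∈ T, c u ≤ 0

lemma extendHidden_indicator (T : Finset G.Hidden) (w : G.V) :
    G.extendHidden (fun u => if u ∈ T then 1 else 0) w =
      if ∃ hw : w ∈ G.hidden, (⟨w, hw⟩ : G.Hidden) ∈ T then 1 else 0 := by
  by_cases hw : w ∈ G.hidden <;> simp [extendHidden, hw]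

lemma sum_mulVec_B (T : Finset G.Hidden) (x : G.Edge → ℝ) :
    ∑ u ∈ T, (G.B *ᵥ x) u = ∑ f : G.Edge,
      ((if ∃ hw : f.1.2 ∈ G.hidden, (⟨f.1.2, hw⟩ : G.Hidden) ∈ T then 1 else 0) -
        (if ∃ hw : f.1.1 ∈ G.hidden, (⟨f.1.1, hw⟩ : G.Hidden) ∈ T then 1 else 0)) * x f := by
  have : ∑ u ∈ T, (G.B *ᵥ x) u = (fun u => if u ∈ T then 1 else 0) ⬝ᵥ (G.B *ᵥ x) := by
    simp only [dotProduct, ite_mul, one_mul, zero_mul, Finset.sum_ite_mem, univ_inter]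
  rw [this, dotProduct_mulVec]
  simp only [dotProduct, vecMul_B, extendHidden_indicator]

lemma sum_nonneg_of_forall_fst_eq_zero {v : G.V} {T : Finset G.Hidden}
    (hT : ∀ u ∈ T, (u : G.V) ≠ v → ∀ w : G.V, ((u : G.V), w) ∈ G.edges →
      ∃ hw : w ∈ G.hidden, (⟨w, hw⟩ : G.Hidden) ∈ T)
    {x : G.Edge → ℝ} (hx : x ∈ G.flowPolytope c) (hxv : ∀ f : G.Edge, f.1.1 = v → x f = 0) :
    0 ≤ ∑ u ∈ T, c u := by
  rw [← hx.2, sum_mulVec_B]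
  refine Finset.sum_nonneg fun f _ => ?_
  by_cases hfv : f.1.1 = v
  · simp [hxv f hfv]
  by_cases h₁ : ∃ hw : f.1.1 ∈ G.hidden, (⟨f.1.1, hw⟩ : G.Hidden) ∈ T
  · obtain ⟨hw, hwT⟩ := h₁
    simp [hT _ hwT hfv f.1.2 f.2, hw, hwT]
  · rw [if_neg h₁, sub_zero]
    exact mul_nonneg (by split_ifs <;> norm_num) (hx.1 f)

lemma sum_nonpos_of_forall_snd_eq_zero {v : G.V} {T : Finset G.Hidden}
    (hT : ∀ u ∈ T, (u : G.V) ≠ v → ∀ w : G.V, (w, (u : G.V)) ∈ G.edges →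
      ∃ hw : w ∈ G.hidden, (⟨w, hw⟩ : G.Hidden) ∈ T)
    {x : G.Edge → ℝ} (hx : x ∈ G.flowPolytope c) (hxv : ∀ f : G.Edge, f.1.2 = v → x f = 0) :
    ∑ u ∈ T, c u ≤ 0 := by
  rw [← hx.2, sum_mulVec_B]
  refine Finset.sum_nonpos fun f _ => ?_
  by_cases hfv : f.1.2 = v
  · simp [hxv f hfv]
  by_cases h₂ : ∃ hw : f.1.2 ∈ G.hidden, (⟨f.1.2, hw⟩ : G.Hidden) ∈ T
  · obtain ⟨hw, hwT⟩ := h₂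
    simp [hT _ hwT hfv f.1.1 f.2, hw, hwT]
  · rw [if_neg h₂, zero_sub, neg_mul]
    exact neg_nonpos.2 (mul_nonneg (by split_ifs <;> norm_num) (hx.1 f))

theorem outBalanced_of_isConnected (hconn : IsConnected (G.invariantSet c)) :
    G.OutBalanced c := by
  intro v hv T _ hT
  obtain ⟨-, e, ⟨he, -⟩, huniq⟩ := outBottleneck_iff.1 hv
  obtain ⟨x, hx, hxe⟩ := exists_mem_flowPolytope_eq_zero hconn ⟨e, he⟩
  exact sum_nonneg_of_forall_fst_eq_zero hT hx fun f hf => by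
    rwa [show f = ⟨e, he⟩ from Subtype.ext (huniq f ⟨f.2, hf⟩)]

theorem inBalanced_of_isConnected (hconn : IsConnected (G.invariantSet c)) :
    G.InBalanced c := by
  intro v hv T _ hT
  obtain ⟨-, e, ⟨he, -⟩, huniq⟩ := inBottleneck_iff.1 hv
  obtain ⟨x, hx, hxe⟩ := exists_mem_flowPolytope_eq_zero hconn ⟨e, he⟩
  exact sum_nonpos_of_forall_snd_eq_zero hT hx fun f hf => by
    rwa [show f = ⟨e, he⟩ from Subtype.ext (huniq f ⟨f.2, hf⟩)]

def reverse (G : DagNet) : DagNet where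
  V := G.V
  edges := G.edges.map (Equiv.prodComm G.V G.V).toEmbedding
  VI := G.VO
  VO := G.VI
  acyclic v h := G.acyclic v <| Relation.transGen_swap.1 <| by simpa [Function.swap] using h
  no_edge_into_input e he := by simpa using G.no_edge_from_output _ (mem_map_equiv.1 he)
  no_edge_from_output e he := by simpa using G.no_edge_into_input _ (mem_map_equiv.1 he)
  io_disjoint := G.io_disjoint.symm

lemma mem_reverse_edges {a b : G.V} : (a, b) ∈ G.reverse.edges ↔ (b, a) ∈ G.edges :=
  mem_map_equiv

lemma mem_reverse_hidden {v : G.V} : v ∈ G.reverse.hidden ↔ v ∈ G.hidden := by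
  change v ∈ univ \ (G.VO ∪ G.VI) ↔ _
  rw [union_comm]
  rfl

lemma reverse_reaches {a b : G.V} : G.reverse.Reaches a b ↔ G.Reaches b a := by
  have : (fun x y : G.V => (x, y) ∈ G.reverse.edges) = Function.swap fun x y => (x, y) ∈ G.edges :=
    funext₂ fun _ _ => propext mem_reverse_edges
  unfold Reaches
  change Relation.ReflTransGen (fun x y : G.V => (x, y) ∈ G.reverse.edges) a b ↔ _
  rw [this, Relation.reflTransGen_swap]

lemma isPathFun_reverse_comp_rev {k : ℕ} {u : Fin (k + 1) → G.V} (hu : G.IsPathFun u) :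
    G.reverse.IsPathFun fun i => u i.rev := fun i =>
  mem_reverse_edges.2 (by simpa only [Fin.rev_succ, Fin.rev_castSucc] using hu i.rev)

lemma mem_pureAnc_of_mem_reverse_pureDesc {v w : G.V} (h : w ∈ G.reverse.pureDesc v) :
    w ∈ G.pureAnc v := by
  obtain ⟨hw, hvw, hpaths⟩ := h
  refine ⟨mem_reverse_hidden.1 hw, reverse_reaches.1 hvw, fun k u hu h0 hlast => ?_⟩
  obtain ⟨i, hi⟩ := hpaths k _ (isPathFun_reverse_comp_rev hu)
    (by simpa only [Fin.rev_last]) (by simpa only [Fin.rev_zero])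
  exact ⟨_, hi⟩

lemma reverse_inBottleneck {v : G.V} : G.reverse.InBottleneck v ↔ G.OutBottleneck v := by
  have : #(G.reverse.edges.filter fun f => f.2 = v) = #(G.edges.filter fun f => f.1 = v) := by
    change #((G.edges.map (Equiv.prodComm G.V G.V).toEmbedding).filter fun f => f.2 = v) = _
    rw [filter_map, card_map]
    rfl
  unfold InBottleneck OutBottleneck
  exact and_congr mem_reverse_hidden (iff_of_eq (congrArg (· = 1) this))

def ReachesAvoiding (G : DagNet) (e : G.V × G.V) : G.V → G.V → Prop :=
  Relation.ReflTransGen fun a b => (a, b) ∈ G.edges ∧ (a, b) ≠ e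

def AntitoneOff (G : DagNet) (e : G.V × G.V) (φ : G.V → ℝ) : Prop :=
  ∀ f ∈ G.edges, f ≠ e → φ f.2 ≤ φ f.1

lemma Reaches.reachesAvoiding_or {a b : G.V} (h : G.Reaches a b) (e : G.V × G.V) :
    G.ReachesAvoiding e a b ∨ G.Reaches a e.1 ∧ G.Reaches e.2 b := by
  induction h with
  | refl => exact .inl .refl
  | @tail b c hab hbc ih =>
    by_cases hbce : (b, c) = e
    · subst hbce
      exact .inr ⟨hab, .refl⟩
    · exact ih.imp (·.tail ⟨hbc, hbce⟩) fun h => ⟨h.1, h.2.tail hbc⟩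

section Potential

variable {e : G.V × G.V} {φ : G.V → ℝ} {v : G.V}

lemma ReachesAvoiding.le (hmono : G.AntitoneOff e φ) {a b : G.V}
    (h : G.ReachesAvoiding e a b) : φ b ≤ φ a := by
  induction h with
  | refl => rfl
  | tail _ hbc ih => exact (hmono _ hbc.1 hbc.2).trans ih

lemma reaches_of_potential_pos (hsrc : ∀ v ∈ G.hidden, ∃ i ∈ G.VI, G.Reaches i v)
    (hφ : ∀ i ∈ G.VI, φ i = 0) (hmono : G.AntitoneOff e φ) (hv : v ∈ G.hidden) (hφv : 0 < φ v) :
    G.Reaches e.2 v := by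
  obtain ⟨i, hi, hiv⟩ := hsrc v hv
  refine (hiv.reachesAvoiding_or e).elim (fun h => ?_) (·.2)
  linarith [h.le hmono, hφ i hi]

lemma mem_pureDesc_of_potential_pos (hsrc : ∀ v ∈ G.hidden, ∃ i ∈ G.VI, G.Reaches i v)
    (hφ : ∀ i ∈ G.VI, φ i = 0) (hmono : G.AntitoneOff e φ) (hv : v ∈ G.hidden) (hφv : 0 < φ v) :
    v ∈ G.pureDesc e.2 := by
  refine ⟨hv, reaches_of_potential_pos hsrc hφ hmono hv hφv, fun k u hu hlast hfirst => ?_⟩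
  by_contra! hne
  have : G.ReachesAvoiding e (u 0) (u (Fin.last k)) :=
    .of_fin u fun i => ⟨hu i, fun h => hne i.succ (congrArg Prod.snd h)⟩
  linarith [this.le hmono, hφ _ hfirst, hlast ▸ hφv]

lemma inBottleneck_of_potential_pos (hsrc : ∀ v ∈ G.hidden, ∃ i ∈ G.VI, G.Reaches i v)
    (he : e ∈ G.edges) (hφ : ∀ i ∈ G.VI, φ i = 0) (hmono : G.AntitoneOff e φ)
    (hv : v ∈ G.hidden) (hφv : 0 < φ v) : G.InBottleneck e.2 := by
  have hev := reaches_of_potential_pos hsrc hφ hmono hv hφv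
  have hev' : G.ReachesAvoiding e e.2 v :=
    (hev.reachesAvoiding_or e).resolve_right fun h => not_reaches_of_mem_edges he h.1
  refine inBottleneck_iff.2 ⟨mem_hidden.2 ⟨G.no_edge_into_input e he, fun hVO => ?_⟩,
    ⟨e, ⟨he, rfl⟩, fun ⟨a, b⟩ ⟨hf, (hb : b = e.2)⟩ => ?_⟩⟩
  · exact (mem_hidden.1 (eq_of_reaches_of_mem_VO hVO hev ▸ hv)).2 hVO
  -- Another edge `(a, e.2)` would give a path from an input to `v` avoiding `e`.
  subst hb
  by_contra hne
  obtain ⟨i, hi, hia⟩ : ∃ i ∈ G.VI, G.Reaches i a := by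
    by_cases ha : a ∈ G.VI
    · exact ⟨a, ha, .refl⟩
    · exact hsrc a (mem_hidden.2 ⟨ha, G.no_edge_from_output _ hf⟩)
  have hia' : G.ReachesAvoiding e i a :=
    (hia.reachesAvoiding_or e).resolve_right fun h => not_reaches_of_mem_edges hf h.2
  have hiv : G.ReachesAvoiding e i v := (hia'.tail ⟨hf, hne⟩).trans hev'
  linarith [hiv.le hmono, hφ i hi]

lemma AntitoneOff.reverse_neg (hmono : G.AntitoneOff e φ) :
    G.reverse.AntitoneOff e.swap (-φ) :=
  fun ⟨a, b⟩ hf hfe => neg_le_neg <|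
    hmono (b, a) (mem_reverse_edges.1 hf) fun h => hfe (by rw [← h]; rfl)

lemma reverse_sources (hsnk : ∀ v ∈ G.hidden, ∃ o ∈ G.VO, G.Reaches v o) :
    ∀ v ∈ G.reverse.hidden, ∃ i ∈ G.reverse.VI, G.reverse.Reaches i v := fun v hv =>
  (hsnk v (mem_reverse_hidden.1 hv)).imp fun _ ⟨ho, h⟩ => ⟨ho, reverse_reaches.2 h⟩

lemma mem_pureAnc_of_potential_neg (hsnk : ∀ v ∈ G.hidden, ∃ o ∈ G.VO, G.Reaches v o)
    (hφ : ∀ o ∈ G.VO, φ o = 0) (hmono : G.AntitoneOff e φ) (hv : v ∈ G.hidden) (hφv : φ v < 0) :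
    v ∈ G.pureAnc e.1 :=
  mem_pureAnc_of_mem_reverse_pureDesc <| mem_pureDesc_of_potential_pos (reverse_sources hsnk)
    (fun o ho => neg_eq_zero.2 (hφ o ho)) hmono.reverse_neg (mem_reverse_hidden.2 hv)
    (neg_pos.2 hφv)

lemma outBottleneck_of_potential_neg (hsnk : ∀ v ∈ G.hidden, ∃ o ∈ G.VO, G.Reaches v o)
    (he : e ∈ G.edges) (hφ : ∀ o ∈ G.VO, φ o = 0) (hmono : G.AntitoneOff e φ)
    (hv : v ∈ G.hidden) (hφv : φ v < 0) : G.OutBottleneck e.1 :=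
  reverse_inBottleneck.1 <| inBottleneck_of_potential_pos (reverse_sources hsnk)
    (mem_reverse_edges.2 he) (fun o ho => neg_eq_zero.2 (hφ o ho)) hmono.reverse_neg
    (mem_reverse_hidden.2 hv) (neg_pos.2 hφv)

lemma sum_superlevel_nonpos (hsrc : ∀ v ∈ G.hidden, ∃ i ∈ G.VI, G.Reaches i v)
    (hc : G.InBalanced c) (he : e ∈ G.edges) {y : G.Hidden → ℝ}
    (hmono : G.AntitoneOff e (G.extendHidden y)) {t : ℝ} (ht : 0 ≤ t) :
    ∑ u with t < y u, c u ≤ 0 := by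
  have hφ (i) (hi : i ∈ G.VI) : G.extendHidden y i = 0 :=
    extendHidden_of_notMem y fun h => (mem_hidden.1 h).1 hi
  have hpos (u : G.Hidden) (hu : t < y u) : 0 < G.extendHidden y u := by
    rw [extendHidden_val]; linarith
  obtain hT | ⟨v, hv⟩ := ({u | t < y u} : Finset G.Hidden).eq_empty_or_nonempty
  · rw [hT, sum_empty]
  refine hc e.2 (inBottleneck_of_potential_pos hsrc he hφ hmono v.2 (hpos v (mem_filter.1 hv).2))
    _ (fun u hu => mem_pureDesc_of_potential_pos hsrc hφ hmono u.2 (hpos u (mem_filter.1 hu).2))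
    fun u hu hue w hw => ?_
  have hle : G.extendHidden y u ≤ G.extendHidden y w :=
    hmono (w, u) hw fun h => hue (congrArg Prod.snd h)
  have htu : t < y u := (mem_filter.1 hu).2
  have hw' : w ∈ G.hidden := by
    by_contra hw'
    linarith [extendHidden_of_notMem y hw', hpos u htu]
  refine ⟨hw', mem_filter.2 ⟨mem_univ _, ?_⟩⟩
  linarith [extendHidden_val y u, extendHidden_val y ⟨w, hw'⟩]

lemma sum_sublevel_nonneg (hsnk : ∀ v ∈ G.hidden, ∃ o ∈ G.VO, G.Reaches v o)
    (hc : G.OutBalanced c) (he : e ∈ G.edges) {y : G.Hidden → ℝ}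
    (hmono : G.AntitoneOff e (G.extendHidden y)) {t : ℝ} (ht : 0 ≤ t) :
    0 ≤ ∑ u with t < -y u, c u := by
  have hφ (o) (ho : o ∈ G.VO) : G.extendHidden y o = 0 :=
    extendHidden_of_notMem y fun h => (mem_hidden.1 h).2 ho
  have hneg (u : G.Hidden) (hu : t < -y u) : G.extendHidden y u < 0 := by
    rw [extendHidden_val]; linarith
  obtain hT | ⟨v, hv⟩ := ({u | t < -y u} : Finset G.Hidden).eq_empty_or_nonempty
  · rw [hT, sum_empty]
  refine hc e.1 (outBottleneck_of_potential_neg hsnk he hφ hmono v.2 (hneg v (mem_filter.1 hv).2))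
    _ (fun u hu => mem_pureAnc_of_potential_neg hsnk hφ hmono u.2 (hneg u (mem_filter.1 hu).2))
    fun u hu hue w hw => ?_
  have hle : G.extendHidden y w ≤ G.extendHidden y u :=
    hmono (u, w) hw fun h => hue (congrArg Prod.fst h)
  have htu : t < -y u := (mem_filter.1 hu).2
  have hw' : w ∈ G.hidden := by
    by_contra hw'
    linarith [extendHidden_of_notMem y hw', hneg u htu]
  refine ⟨hw', mem_filter.2 ⟨mem_univ _, ?_⟩⟩
  linarith [extendHidden_val y u, extendHidden_val y ⟨w, hw'⟩]

lemma dotProduct_nonpos_of_balanced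
    (hpath : ∀ v ∈ G.hidden, ∃ i ∈ G.VI, ∃ o ∈ G.VO, G.Reaches i v ∧ G.Reaches v o)
    (hout : G.OutBalanced c) (hin : G.InBalanced c) (he : e ∈ G.edges) {y : G.Hidden → ℝ}
    (hmono : G.AntitoneOff e (G.extendHidden y)) : y ⬝ᵥ c ≤ 0 := by
  have hsrc (v) (hv : v ∈ G.hidden) : ∃ i ∈ G.VI, G.Reaches i v :=
    (hpath v hv).imp fun _ ⟨hi, _, _, h, _⟩ => ⟨hi, h⟩
  have hsnk (v) (hv : v ∈ G.hidden) : ∃ o ∈ G.VO, G.Reaches v o :=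
    let ⟨_, _, o, ho, _, h⟩ := hpath v hv; ⟨o, ho, h⟩
  have hpos := sum_max_mul_nonpos_of_sum_superlevel_nonpos y c fun t ht =>
    sum_superlevel_nonpos hsrc hin he hmono ht
  have hneg := sum_max_mul_nonpos_of_sum_superlevel_nonpos (-y) (-c) fun t ht => by
    simpa only [Pi.neg_apply, sum_neg_distrib, neg_nonpos] using
      sum_sublevel_nonneg hsnk hout he hmono ht
  calc y ⬝ᵥ c = ∑ u, max (y u) 0 * c u + ∑ u, max ((-y) u) 0 * (-c) u := by
        rw [dotProduct, ← sum_add_distrib]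
        refine sum_congr rfl fun u _ => ?_
        rw [Pi.neg_apply, Pi.neg_apply, mul_neg, ← sub_eq_add_neg, ← sub_mul, max_zero_sub_eq_self]
    _ ≤ 0 := add_nonpos hpos hneg

end Potential

theorem exists_mem_flowPolytope_eq_zero_of_balanced
    (hpath : ∀ v ∈ G.hidden, ∃ i ∈ G.VI, ∃ o ∈ G.VO, G.Reaches i v ∧ G.Reaches v o)
    (hout : G.OutBalanced c) (hin : G.InBalanced c) (e : G.Edge) :
    ∃ x ∈ G.flowPolytope c, x e = 0 := by
  obtain ⟨x, hx0, hxe, hx⟩ | ⟨y, hy, hyc⟩ :=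
    G.B.exists_nonneg_mulVec_eq_or_exists_vecMul_nonpos c (univ.erase e)
  · exact ⟨x, ⟨hx0, hx⟩, hxe e (notMem_erase e univ)⟩
  have hmono : G.AntitoneOff e.1 (G.extendHidden y) := fun f hf hfe => by
    have := hy ⟨f, hf⟩ (mem_erase.2 ⟨fun h => hfe (congrArg Subtype.val h), mem_univ _⟩)
    rw [vecMul_B] at this
    linarith
  exact absurd hyc (not_lt.2 (dotProduct_nonpos_of_balanced hpath hout hin e.2 hmono))

end DagNet

/-- complete characterization of connectedness of the invariant
set: `H_G(c)` is connected iff every forward-stable set of pure ancestors of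
an out-bottleneck has nonnegative total balance and every backward-stable set
of pure descendants of an in-bottleneck has nonpositive total balance. -/
theorem statement5 (G : DagNet)
    (hpath : ∀ v ∈ G.hidden, ∃ i ∈ G.VI, ∃ o ∈ G.VO,
      G.Reaches i v ∧ G.Reaches v o)
    (c : G.Hidden → ℝ) :
    IsConnected (G.invariantSet c) ↔
      ((∀ v : G.V, G.OutBottleneck v → ∀ T : Finset G.Hidden,
          (∀ u ∈ T, (u : G.V) ∈ G.pureAnc v) →
          (∀ u ∈ T, (u : G.V) ≠ v → ∀ w : G.V, ((u : G.V), w) ∈ G.edges →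
            ∃ hw : w ∈ G.hidden, (⟨w, hw⟩ : G.Hidden) ∈ T) →
          0 ≤ ∑ u ∈ T, c u) ∧
       (∀ v : G.V, G.InBottleneck v → ∀ T : Finset G.Hidden,
          (∀ u ∈ T, (u : G.V) ∈ G.pureDesc v) →
          (∀ u ∈ T, (u : G.V) ≠ v → ∀ w : G.V, (w, (u : G.V)) ∈ G.edges →
            ∃ hw : w ∈ G.hidden, (⟨w, hw⟩ : G.Hidden) ∈ T) →
          ∑ u ∈ T, c u ≤ 0)) :=
  ⟨fun h => ⟨DagNet.outBalanced_of_isConnected h, DagNet.inBalanced_of_isConnected h⟩,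
    fun ⟨hout, hin⟩ => DagNet.isConnected_invariantSet (DagNet.flowPolytope_nonempty hpath c)
      (DagNet.exists_mem_flowPolytope_eq_zero_of_balanced hpath hout hin)⟩
end
end

section
/- Let m, n be natural numbers, let H : ℝ → ℝ^{n×n} be a continuous matrix-valued function, and let J : ℝ → ℝ^{m×n} be a differentiable matrix-valued function satisfying the linear matrix differential equation J'(t) = J(t)·H(t) for all t ∈ ℝ. Then the rank of J is constant: rank J(t) = rank J(0) for all t ∈ ℝ. -/
open Matrix Set

/-!
A row vector `c` with `c J(t₀) = 0` stays in the left kernel of `J` for all time: `x(t) = c J(t)`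
solves the linear ODE `x' = x H(t)`, whose right-hand side is Lipschitz in `x` with a constant
uniform on compact time intervals, so by uniqueness `x` agrees with the zero solution. Hence all
the `J(t)` have the same left kernel, and by rank–nullity the same rank.
-/

theorem Matrix.rank_eq_of_vecMul_eq_zero_iff {m n K : Type*} [Fintype m] [Fintype n] [Field K]
    {A B : Matrix m n K} (h : ∀ c, c ᵥ* A = 0 ↔ c ᵥ* B = 0) : A.rank = B.rank := by
  have hker : LinearMap.ker A.vecMulLinear = LinearMap.ker B.vecMulLinear := Submodule.ext h
  have hA := LinearMap.finrank_range_add_finrank_ker A.vecMulLinear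
  have hB := LinearMap.finrank_range_add_finrank_ker B.vecMulLinear
  rw [← rank_transpose A, ← rank_transpose B, rank, rank, mulVecLin_transpose,
    mulVecLin_transpose]
  rw [hker] at hA
  omega

theorem hasDerivAt_vecMul_of_hasDerivAt_entries {m n 𝕜 : Type*} [Fintype m] [Fintype n]
    [NontriviallyNormedField 𝕜] {J : 𝕜 → Matrix m n 𝕜} {J' : Matrix m n 𝕜} {t : 𝕜}
    (hJ : ∀ i j, HasDerivAt (fun s => J s i j) (J' i j) t) (c : m → 𝕜) :
    HasDerivAt (fun s => c ᵥ* J s) (c ᵥ* J') t :=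
  hasDerivAt_pi.2 fun j => by
    simpa only [vecMul, dotProduct] using HasDerivAt.fun_sum fun i _ => (hJ i j).const_mul (c i)

theorem eq_zero_of_hasDerivAt_clm_apply {E : Type*} [NormedAddCommGroup E] [NormedSpace ℝ E]
    {A : ℝ → E →L[ℝ] E} (hA : Continuous A) {x : ℝ → E}
    (hx : ∀ t, HasDerivAt x (A t (x t)) t) {t₀ : ℝ} (h₀ : x t₀ = 0) (t : ℝ) : x t = 0 := by
  set a := min t₀ t - 1
  set b := max t₀ t + 1
  have ht₀ : t₀ ∈ Ioo a b := ⟨by grind, by grind⟩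
  have ht : t ∈ Ioo a b := ⟨by grind, by grind⟩
  obtain ⟨K, hK⟩ := isCompact_Icc.bddAbove_image (hA.nnnorm.continuousOn (s := Icc a b))
  have hlip : ∀ s ∈ Ioo a b, LipschitzOnWith K (A s) univ := fun s hs =>
    ((A s).lipschitz.weaken (hK (mem_image_of_mem _ (Ioo_subset_Icc_self hs)))).lipschitzOnWith
  have hzero : ∀ s ∈ Ioo a b, HasDerivAt (fun _ => (0 : E)) (A s 0) s ∧ (0 : E) ∈ univ :=
    fun s _ => ⟨(map_zero (A s)).symm ▸ hasDerivAt_const s 0, trivial⟩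
  exact ODE_solution_unique_of_mem_Ioo hlip ht₀ (fun s _ => ⟨hx s, trivial⟩) hzero h₀ ht

/-- if `H : ℝ → ℝ^{n×n}` is continuous (entrywise) and
`J : ℝ → ℝ^{m×n}` is differentiable (entrywise) with `J'(t) = J(t)·H(t)` for
all `t`, then the rank of `J(t)` is constant. -/
theorem statement14 (m n : ℕ) (H : ℝ → Matrix (Fin n) (Fin n) ℝ)
    (hH : ∀ (i j : Fin n), Continuous fun t => H t i j)
    (J : ℝ → Matrix (Fin m) (Fin n) ℝ)
    (hJ : ∀ (t : ℝ) (i : Fin m) (j : Fin n),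
      HasDerivAt (fun s => J s i j) ((J t * H t) i j) t) :
    ∀ t : ℝ, (J t).rank = (J 0).rank := by
  let A : ℝ → (Fin n → ℝ) →L[ℝ] Fin n → ℝ := fun t =>
    LinearMap.toContinuousLinearMap (H t).vecMulLinear
  have hA : Continuous A := continuous_clm_apply.2 fun y =>
    continuous_const.matrix_vecMul (continuous_pi fun i => continuous_pi fun j => hH i j)
  have hrow : ∀ c : Fin m → ℝ, ∀ t, HasDerivAt (fun s => c ᵥ* J s) (A t (c ᵥ* J t)) t :=
    fun c t => by
      simpa only [A, LinearMap.coe_toContinuousLinearMap', coe_vecMulLinear, vecMul_vecMul]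
        using hasDerivAt_vecMul_of_hasDerivAt_entries (hJ t) c
  have hkernel : ∀ c : Fin m → ℝ, ∀ t₀ t, c ᵥ* J t₀ = 0 → c ᵥ* J t = 0 := fun c t₀ t h =>
    eq_zero_of_hasDerivAt_clm_apply hA (hrow c) h t
  exact fun t => Matrix.rank_eq_of_vecMul_eq_zero_iff fun c => ⟨hkernel c t 0, hkernel c 0 t⟩
end
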